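/- For the Hirzebruch surface Σ_e with e ≥ 2 and a smooth curve C ≡ kC₀ + mF with k ≥ 3 and m ≥ ke, one has g - k ≥ h⁰(S, ω_S^{⊗2}(C)), where g = (k-1)(m - 1 - ke/2) and ω_S^{⊗2}(C) ≡ (k-4)C₀ + (m - 2e - 4)F has h⁰ = χ computed by Riemann–Roch. -/
import Mathlib


/-- Arithmetic inequality behind `g - k ≥ h⁰(Σ_e, ω^{⊗2}(C))` on the Hirzebruch
surface `Σ_e` (`e ≥ 2`), for a smooth curve `C ≡ k C₀ + m F` with `k ≥ 4`,
`m ≥ ke`, and `2g = (k-1)(2m - 2 - ke)`.  For `D = (k-4)C₀ + (m-2e-4)F` one has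
`D² = -e(k-4)² + 2(k-4)(m-2e-4)` and
`K·D = 2e(k-4) - 2(m-2e-4) - (e+2)(k-4)`, and then
`2(g - k) ≥ 2 + D² - K·D`, i.e. `g - k ≥ 1 + (D² - K·D)/2 = χ(D)`. -/
theorem hirzebruch_h0_bound (e k m g : ℤ) (he : 2 ≤ e) (hk : 4 ≤ k)
    (hm : k * e ≤ m) (hg : 2 * g = (k - 1) * (2 * m - 2 - k * e)) :
    2 * (g - k) ≥ 2 + (-e * (k - 4) ^ 2 + 2 * (k - 4) * (m - 2 * e - 4))
      - (2 * e * (k - 4) - 2 * (m - 2 * e - 4) - (e + 2) * (k - 4)) := by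
  nlinarith [mul_nonneg (sub_nonneg.2 he) (sub_nonneg.2 hk), sq_nonneg (k-4), mul_nonneg (sub_nonneg.2 hk) (sub_nonneg.2 hm), sq_nonneg (e-2)]
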